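/- arXiv:2006.15338 — 2 statements merged into one kernel-verified Lean document; each statement's English description precedes it below -/
import Mathlib

section
/- Let S be an inverse semigroup with zero on which the Lenz relation ≡ is idempotent-pure. Then ≡ is the unique 0-restricted, idempotent-pure, essential congruence on S: for every congruence ρ on S that is 0-restricted, idempotent-pure and essential, and for all a, b ∈ S, ρ a b holds if and only if a ≡ b. -/
/-- An inverse semigroup with zero. -/
class InverseSemigroupWithZero (S : Type*) extends Semigroup S, Zero S where
  zero_mul : ∀ a : S, 0 * a = 0
  mul_zero : ∀ a : S, a * 0 = 0
  inv : S → S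
  mul_inv_mul : ∀ a : S, a * inv a * a = a
  inv_mul_inv : ∀ a : S, inv a * a * inv a = inv a
  inv_unique : ∀ a b : S, a * b * a = a → b * a * b = b → b = inv a

namespace InverseSemigroupWithZero

variable {S : Type*} [InverseSemigroupWithZero S]

/-- The natural partial order: `a ≤ b` iff `a = b * a⁻¹ * a`. -/
def nle (a b : S) : Prop := a = b * inv a * a

/-- `a ≤_e b`: `a` is essential in `b`. -/
def essIn (a b : S) : Prop :=
  nle a b ∧ ∀ x : S, x ≠ 0 → nle x b → a * inv x * x ≠ 0

/-- The Lenz relation `≡`. -/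
def lenz (a b : S) : Prop :=
  (∀ x : S, x ≠ 0 → nle x a → ∃ z : S, z ≠ 0 ∧ nle z x ∧ nle z b) ∧
  (∀ y : S, y ≠ 0 → nle y b → ∃ z : S, z ≠ 0 ∧ nle z y ∧ nle z a)

end InverseSemigroupWithZero

/-!
If `a ρ b` and `0 ≠ x ≤ a`, multiplying on the right by `x⁻¹x` gives `x ρ w` with
`w = b x⁻¹x ≤ b`. Purity of `ρ` makes `x w⁻¹` idempotent, so `x w⁻¹w` lies below both `x` and
`b`, and it is nonzero because it is `ρ`-related to `x` and `ρ` is 0-restricted; hence `ρ ⊆ ≡`.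

Conversely, `≡` is compatible with right multiplication, so `a ≡ b` gives `a b⁻¹ ≡ b b⁻¹`, and
purity of `≡` makes `a b⁻¹` idempotent. Then `c = a b⁻¹b` lies below `a` and `b` and above every
common lower bound of them, so `a ≡ b` says precisely that `c` is essential in both `a` and `b`,
whence `a ρ c ρ b`.
-/

namespace InverseSemigroupWithZero

variable {S : Type*} [InverseSemigroupWithZero S]

lemma inv_inv (a : S) : inv (inv a) = a :=
  (inv_unique (inv a) a (inv_mul_inv a) (mul_inv_mul a)).symm

lemma inv_eq_self_of_isIdempotentElem {e : S} (he : IsIdempotentElem e) : inv e = e :=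
  (inv_unique e e (by rw [he.eq, he.eq]) (by rw [he.eq, he.eq])).symm

lemma isIdempotentElem_inv_mul (a : S) : IsIdempotentElem (inv a * a) := by
  rw [IsIdempotentElem, mul_assoc, ← mul_assoc a, mul_inv_mul]

lemma isIdempotentElem_mul_inv (a : S) : IsIdempotentElem (a * inv a) := by
  rw [IsIdempotentElem, mul_assoc, ← mul_assoc (inv a), inv_mul_inv]

/-- With `x = inv (e * f)`, the element `f * x * e` is also an inverse of `e * f`, hence equal to
`x`; this makes `x` idempotent, and an idempotent is its own inverse. -/
lemma isIdempotentElem_mul {e f : S} (he : IsIdempotentElem e) (hf : IsIdempotentElem f) :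
    IsIdempotentElem (e * f) := by
  set x := inv (e * f)
  have hx : x * (e * f) * x = x := inv_mul_inv _
  have hfxe : f * x * e = x := by
    apply inv_unique
    · calc e * f * (f * x * e) * (e * f) = e * f * x * (e * f) := by
            simp only [mul_assoc, he.mul_self_mul, hf.mul_self_mul]
        _ = e * f := mul_inv_mul _
    · calc f * x * e * (e * f) * (f * x * e) = f * (x * (e * f) * x) * e := by
            simp only [mul_assoc, he.mul_self_mul, hf.mul_self_mul]
        _ = f * x * e := by rw [hx, mul_assoc]
  have hxx : IsIdempotentElem x := by
    calc x * x = f * x * e * (f * x * e) := by rw [hfxe]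
      _ = f * (x * (e * f) * x) * e := by simp only [mul_assoc]
      _ = x := by rw [hx, hfxe]
  rw [← inv_inv (e * f), inv_eq_self_of_isIdempotentElem hxx]
  exact hxx

lemma commute_of_isIdempotentElem {e f : S} (he : IsIdempotentElem e)
    (hf : IsIdempotentElem f) : Commute e f := by
  have hfe : f * e = inv (e * f) := by
    apply inv_unique
    · calc e * f * (f * e) * (e * f) = e * f * (e * f) := by
            simp only [mul_assoc, he.mul_self_mul, hf.mul_self_mul]
        _ = e * f := isIdempotentElem_mul he hf
    · calc f * e * (e * f) * (f * e) = f * e * (f * e) := by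
            simp only [mul_assoc, he.mul_self_mul, hf.mul_self_mul]
        _ = f * e := isIdempotentElem_mul hf he
  rw [Commute, SemiconjBy, hfe, inv_eq_self_of_isIdempotentElem (isIdempotentElem_mul he hf)]

lemma inv_mul_rev (a b : S) : inv (a * b) = inv b * inv a := by
  have hcomm := commute_of_isIdempotentElem (isIdempotentElem_mul_inv b)
    (isIdempotentElem_inv_mul a)
  symm; apply inv_unique
  · calc a * b * (inv b * inv a) * (a * b) = a * ((b * inv b) * (inv a * a)) * b := by
          simp only [mul_assoc]
      _ = (a * inv a * a) * (b * inv b * b) := by rw [hcomm.eq]; simp only [mul_assoc]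
      _ = a * b := by rw [mul_inv_mul, mul_inv_mul]
  · calc inv b * inv a * (a * b) * (inv b * inv a)
          = inv b * ((inv a * a) * (b * inv b)) * inv a := by simp only [mul_assoc]
      _ = (inv b * b * inv b) * (inv a * a * inv a) := by
          rw [← hcomm.eq]; simp only [mul_assoc]
      _ = inv b * inv a := by rw [inv_mul_inv, inv_mul_inv]

lemma nle_iff_mul_inv_mul {a b : S} : nle a b ↔ b * (inv a * a) = a := by
  rw [nle, ← mul_assoc, eq_comm]

lemma mul_nle_of_isIdempotentElem_right (a : S) {e : S} (he : IsIdempotentElem e) :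
    nle (a * e) a := by
  have hcomm := commute_of_isIdempotentElem (isIdempotentElem_inv_mul a) he
  rw [nle_iff_mul_inv_mul, inv_mul_rev, inv_eq_self_of_isIdempotentElem he]
  calc a * (e * inv a * (a * e)) = a * (e * (inv a * a) * e) := by simp only [mul_assoc]
    _ = a * (inv a * a * e * e) := by rw [← hcomm.eq]
    _ = a * e := by rw [he.mul_mul_self, ← mul_assoc, ← mul_assoc, mul_inv_mul]

lemma mul_nle_of_isIdempotentElem_left {e : S} (he : IsIdempotentElem e) (a : S) :
    nle (e * a) a := by
  have hcomm := commute_of_isIdempotentElem (isIdempotentElem_mul_inv a) he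
  rw [nle_iff_mul_inv_mul, inv_mul_rev, inv_eq_self_of_isIdempotentElem he]
  calc a * (inv a * e * (e * a)) = a * inv a * (e * (e * a)) := by simp only [mul_assoc]
    _ = e * (a * inv a) * a := by rw [he.mul_self_mul, ← mul_assoc, hcomm.eq]
    _ = e * a := by rw [mul_assoc, mul_inv_mul]

lemma nle.mul_inv_mul_eq {a b : S} (h : nle a b) : a * (inv b * b) = a := by
  have hcomm := commute_of_isIdempotentElem (isIdempotentElem_inv_mul a)
    (isIdempotentElem_inv_mul b)
  rw [nle_iff_mul_inv_mul] at h
  calc a * (inv b * b) = b * (inv a * a * (inv b * b)) := by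
        conv_lhs => rw [← h]
        rw [mul_assoc]
    _ = b * inv b * b * (inv a * a) := by rw [hcomm.eq]; simp only [mul_assoc]
    _ = a := by rw [mul_inv_mul, h]

lemma nle.inv_mul_mul_inv_mul {a b : S} (h : nle a b) :
    inv b * b * (inv a * a) = inv a * a := by
  rw [← (commute_of_isIdempotentElem (isIdempotentElem_inv_mul a)
    (isIdempotentElem_inv_mul b)).eq, mul_assoc, h.mul_inv_mul_eq]

lemma nle.mul_inv_self_mul {a b : S} (h : nle a b) : a * inv a * b = a := by
  have hinv : inv a = inv a * a * inv b := by
    conv_lhs => rw [h]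
    rw [inv_mul_rev, inv_mul_rev, inv_inv, ← mul_assoc]
  calc a * inv a * b = a * (inv a * a * inv b) * b := by conv_lhs => rw [hinv]
    _ = a * inv a * a * (inv b * b) := by simp only [mul_assoc]
    _ = a := by rw [mul_inv_mul, h.mul_inv_mul_eq]

lemma nle.trans {a b c : S} (hab : nle a b) (hbc : nle b c) : nle a c := by
  rw [nle_iff_mul_inv_mul]
  calc c * (inv a * a) = c * (inv b * b) * (inv a * a) := by
        rw [mul_assoc, hab.inv_mul_mul_inv_mul]
    _ = b * (inv a * a) := by rw [nle_iff_mul_inv_mul.1 hbc]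
    _ = a := nle_iff_mul_inv_mul.1 hab

lemma nle.mul_right {a b : S} (h : nle a b) (c : S) : nle (a * c) (b * c) := by
  have hac : a * c = a * inv a * (b * c) := by rw [← mul_assoc, h.mul_inv_self_mul]
  rw [hac]
  exact mul_nle_of_isIdempotentElem_left (isIdempotentElem_mul_inv a) _

lemma mul_inv_mul_of_nle_mul {x y c : S} (h : nle x (y * c)) : x * inv c * c = x := by
  calc x * inv c * c = x * inv x * y * (c * inv c * c) := by
        conv_lhs => rw [← h.mul_inv_self_mul]
        simp only [mul_assoc]
    _ = x := by rw [mul_inv_mul, mul_assoc _ y, h.mul_inv_self_mul]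

lemma nle_mul_inv_mul_of_nle {z a b : S} (hza : nle z a) (hzb : nle z b) :
    nle z (a * inv b * b) := by
  rw [nle_iff_mul_inv_mul]
  calc a * inv b * b * (inv z * z) = a * (inv b * b * (inv z * z)) := by simp only [mul_assoc]
    _ = z := by rw [hzb.inv_mul_mul_inv_mul, nle_iff_mul_inv_mul.1 hza]

/-- `lenz a b` unfolds to `lenzLE a b ∧ lenzLE b a`. -/
def lenzLE (a b : S) : Prop :=
  ∀ x : S, x ≠ 0 → nle x a → ∃ z : S, z ≠ 0 ∧ nle z x ∧ nle z b

lemma lenzLE.mul_right {a b : S} (h : lenzLE a b) (c : S) : lenzLE (a * c) (b * c) := by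
  intro x hx hxac
  have hyc : x * inv c * c = x := mul_inv_mul_of_nle_mul hxac
  have hy : x * inv c ≠ 0 := fun hy => hx (by rw [← hyc, hy, zero_mul])
  have hya : nle (x * inv c) a := (hxac.mul_right (inv c)).trans <| by
    rw [mul_assoc]; exact mul_nle_of_isIdempotentElem_right a (isIdempotentElem_mul_inv c)
  obtain ⟨z, hz, hzy, hzb⟩ := h _ hy hya
  have hzcc : z * c * inv c = z := by
    simpa only [inv_inv] using mul_inv_mul_of_nle_mul (c := inv c) hzy
  refine ⟨z * c, fun hzc => hz ?_, hyc ▸ hzy.mul_right c, hzb.mul_right c⟩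
  rw [← hzcc, hzc, zero_mul]

lemma lenz.symm {a b : S} (h : lenz a b) : lenz b a := ⟨h.2, h.1⟩

lemma lenz.mul_right {a b : S} (h : lenz a b) (c : S) : lenz (a * c) (b * c) :=
  ⟨lenzLE.mul_right h.1 c, lenzLE.mul_right h.2 c⟩

lemma essIn_of_lenzLE {a b c : S} (hca : nle c a) (hab : lenzLE a b)
    (hmeet : ∀ z : S, nle z a → nle z b → nle z c) : essIn c a := by
  refine ⟨hca, fun x hx hxa hcx => ?_⟩
  obtain ⟨z, hz, hzx, hzb⟩ := hab x hx hxa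
  apply hz
  calc z = c * (inv z * z) := (nle_iff_mul_inv_mul.1 (hmeet z (hzx.trans hxa) hzb)).symm
    _ = c * (inv x * x * (inv z * z)) := by rw [hzx.inv_mul_mul_inv_mul]
    _ = c * inv x * x * (inv z * z) := by simp only [mul_assoc]
    _ = 0 := by rw [hcx, zero_mul]

lemma exists_essIn_essIn_of_lenz
    (hip : ∀ e a : S, IsIdempotentElem e → lenz e a → IsIdempotentElem a) {a b : S}
    (h : lenz a b) : ∃ c : S, essIn c a ∧ essIn c b := by
  have hidem : IsIdempotentElem (a * inv b) :=
    hip _ _ (isIdempotentElem_mul_inv b) (h.mul_right (inv b)).symm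
  have hca : nle (a * inv b * b) a := by
    rw [mul_assoc]; exact mul_nle_of_isIdempotentElem_right a (isIdempotentElem_inv_mul b)
  exact ⟨a * inv b * b,
    essIn_of_lenzLE hca h.1 fun _ hza hzb => nle_mul_inv_mul_of_nle hza hzb,
    essIn_of_lenzLE (mul_nle_of_isIdempotentElem_left hidem b) h.2
      fun _ hzb hza => nle_mul_inv_mul_of_nle hza hzb⟩

section Congruence

variable {ρ : S → S → Prop}

lemma exists_nle_nle_of_rel (hequiv : Equivalence ρ)
    (hcongr : ∀ a b c : S, ρ a b → ρ (a * c) (b * c)) (h0 : ∀ a : S, ρ a 0 → a = 0)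
    (hρip : ∀ e a : S, IsIdempotentElem e → ρ e a → IsIdempotentElem a) {x w : S}
    (hxw : ρ x w) (hx : x ≠ 0) : ∃ z : S, z ≠ 0 ∧ nle z x ∧ nle z w := by
  have hidem : IsIdempotentElem (x * inv w) :=
    hρip _ _ (isIdempotentElem_mul_inv w) (hcongr _ _ (inv w) (hequiv.symm hxw))
  have hzw : ρ (x * (inv w * w)) w := by
    have := hcongr _ _ (inv w * w) hxw
    rwa [← mul_assoc w, mul_inv_mul] at this
  refine ⟨x * (inv w * w), fun hz => hx (h0 x ?_),
    mul_nle_of_isIdempotentElem_right x (isIdempotentElem_inv_mul w), ?_⟩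
  · rw [← hz]; exact hequiv.trans hxw (hequiv.symm hzw)
  · rw [← mul_assoc]; exact mul_nle_of_isIdempotentElem_left hidem w

lemma lenzLE_of_rel (hequiv : Equivalence ρ)
    (hcongr : ∀ a b c : S, ρ a b → ρ (a * c) (b * c)) (h0 : ∀ a : S, ρ a 0 → a = 0)
    (hρip : ∀ e a : S, IsIdempotentElem e → ρ e a → IsIdempotentElem a) {a b : S}
    (hab : ρ a b) : lenzLE a b := by
  intro x hx hxa
  have hxb : ρ x (b * (inv x * x)) := by
    have := hcongr _ _ (inv x * x) hab
    rwa [nle_iff_mul_inv_mul.1 hxa] at this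
  obtain ⟨z, hz, hzx, hzw⟩ := exists_nle_nle_of_rel hequiv hcongr h0 hρip hxb hx
  exact ⟨z, hz, hzx,
    hzw.trans (mul_nle_of_isIdempotentElem_right b (isIdempotentElem_inv_mul x))⟩

end Congruence

end InverseSemigroupWithZero

open InverseSemigroupWithZero in
theorem stmt_15_general {S : Type*} [InverseSemigroupWithZero S]
    (hip : ∀ e a : S, e * e = e → lenz e a → a * a = a)
    (ρ : S → S → Prop) (hequiv : Equivalence ρ)
    (hcongr : ∀ a b c : S, ρ a b → ρ (a * c) (b * c))
    (h0 : ∀ a : S, ρ a 0 → a = 0)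
    (hρip : ∀ e a : S, e * e = e → ρ e a → a * a = a)
    (hess : ∀ a b : S, essIn a b → ρ a b) :
    ∀ a b : S, ρ a b ↔ lenz a b := by
  intro a b
  refine ⟨fun hab => ⟨lenzLE_of_rel hequiv hcongr h0 hρip hab,
    lenzLE_of_rel hequiv hcongr h0 hρip (hequiv.symm hab)⟩, fun h => ?_⟩
  obtain ⟨c, hca, hcb⟩ := exists_essIn_essIn_of_lenz hip h
  exact hequiv.trans (hequiv.symm (hess c a hca)) (hess c b hcb)

open InverseSemigroupWithZero in
/-- If the Lenz relation `≡` is idempotent-pure on `S`, then it is the unique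
0-restricted, idempotent-pure, essential congruence on `S`. -/
theorem stmt_15 {S : Type*} [InverseSemigroupWithZero S]
    (hip : ∀ e a : S, e * e = e → lenz e a → a * a = a)
    (ρ : S → S → Prop) (hequiv : Equivalence ρ)
    (hcongl : ∀ a b c : S, ρ a b → ρ (c * a) (c * b))
    (hcongr : ∀ a b c : S, ρ a b → ρ (a * c) (b * c))
    (h0 : ∀ a : S, ρ a 0 → a = 0)
    (hρip : ∀ e a : S, e * e = e → ρ e a → a * a = a)
    (hess : ∀ a b : S, essIn a b → ρ a b) :
    ∀ a b : S, ρ a b ↔ lenz a b :=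
  stmt_15_general hip ρ hequiv hcongr h0 hρip hess
end

section
/- Let X and Y be finite subsets of A*. Then the following are equivalent: (a) for every z ∈ X·A* one has z·A* ∩ Y·A* ≠ ∅, and for every z ∈ Y·A* one has z·A* ∩ X·A* ≠ ∅; (b) X·A^ω = Y·A^ω. (Condition (a) expresses that the idempotents ⋁_{x∈X} xx⁻¹ and ⋁_{y∈Y} yy⁻¹ are identified by the Lenz congruence ≡ on the monoid M_n of surjective morphisms between finitely generated right ideals of A*.) -/
/-!
For (a) ⇒ (b): if `w` has a prefix in `X`, cut `w` to a finite prefix `z` longer than every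
word of `Y`. Some extension of `z` has a prefix `y ∈ Y`; as `y` is shorter than `z`, it is a
prefix of `z` and hence of `w`. Finiteness of `Y` is what makes the cut possible.

For (b) ⇒ (a): extend `z ∈ X·A*` to an infinite word by repeating a letter. It lies in
`X·A^ω = Y·A^ω`, so it has a prefix `y ∈ Y`, and its prefix of length `max |z| |y|` extends
both `z` and `y`.
-/

/-- A finite string `x` is a prefix of the right-infinite string `w : ℕ → Fin n`. -/
def InfPrefix {n : ℕ} (x : List (Fin n)) (w : ℕ → Fin n) : Prop :=
  ∀ i : Fin x.length, w i.val = x.get i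

section

variable {n : ℕ}

def rightIdeal (X : Set (List (Fin n))) : Set (List (Fin n)) :=
  {z | ∃ x ∈ X, x <+: z}

def infCylinder (X : Set (List (Fin n))) : Set (ℕ → Fin n) :=
  {w | ∃ x ∈ X, InfPrefix x w}

def IsEssentialIn (X Y : Set (List (Fin n))) : Prop :=
  ∀ z ∈ rightIdeal X, ∃ w, z <+: w ∧ w ∈ rightIdeal Y

def truncate (w : ℕ → Fin n) (m : ℕ) : List (Fin n) :=
  List.ofFn fun i : Fin m => w i

@[simp]
lemma length_truncate (w : ℕ → Fin n) (m : ℕ) : (truncate w m).length = m :=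
  List.length_ofFn

lemma infPrefix_truncate (w : ℕ → Fin n) (m : ℕ) : InfPrefix (truncate w m) w := by
  unfold truncate
  intro i
  simp

lemma infPrefix_getD (z : List (Fin n)) (a : Fin n) : InfPrefix z (fun i => z.getD i a) := by
  intro i
  simp

lemma List.IsPrefix.infPrefix {x z : List (Fin n)} {w : ℕ → Fin n} (hxz : x <+: z)
    (hz : InfPrefix z w) : InfPrefix x w := by
  intro i
  rw [hz ⟨i, i.isLt.trans_le hxz.length_le⟩]
  simp only [List.get_eq_getElem]
  exact (hxz.getElem i.isLt).symm

lemma InfPrefix.isPrefix_of_length_le {x z : List (Fin n)} {w : ℕ → Fin n}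
    (hx : InfPrefix x w) (hz : InfPrefix z w) (h : x.length ≤ z.length) : x <+: z := by
  rw [List.prefix_iff_eq_take]
  refine List.ext_getElem (by simp [h]) fun i hix _ => ?_
  have hx_i := hx ⟨i, hix⟩
  have hz_i := hz ⟨i, hix.trans_le h⟩
  simp only [List.get_eq_getElem] at hx_i hz_i
  simp [← hx_i, ← hz_i]

lemma infCylinder_subset_of_isEssentialIn {X Y : Set (List (Fin n))} (hY : Y.Finite)
    (h : IsEssentialIn X Y) : infCylinder X ⊆ infCylinder Y := by
  rintro w ⟨x, hxX, hxw⟩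
  set z := truncate w (max x.length (hY.toFinset.sup List.length))
  have hxz : x <+: z := hxw.isPrefix_of_length_le (infPrefix_truncate w _) (by simp [z])
  obtain ⟨w', hzw', y, hyY, hyw'⟩ := h z ⟨x, hxX, hxz⟩
  have hyz : y <+: z := by
    refine List.prefix_of_prefix_length_le hyw' hzw' ?_
    simpa [z] using Or.inr (Finset.le_sup (hY.mem_toFinset.mpr hyY))
  exact ⟨y, hyY, hyz.infPrefix (infPrefix_truncate w _)⟩

lemma isEssentialIn_of_infCylinder_subset (hn : 0 < n) {X Y : Set (List (Fin n))}
    (h : infCylinder X ⊆ infCylinder Y) : IsEssentialIn X Y := by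
  rintro z ⟨x, hxX, hxz⟩
  set w : ℕ → Fin n := fun i => z.getD i ⟨0, hn⟩
  have hzw : InfPrefix z w := infPrefix_getD z _
  obtain ⟨y, hyY, hyw⟩ := h ⟨x, hxX, hxz.infPrefix hzw⟩
  have hprefix {u : List (Fin n)} (hu : InfPrefix u w)
      (hlen : u.length ≤ max z.length y.length) : u <+: truncate w (max z.length y.length) :=
    hu.isPrefix_of_length_le (infPrefix_truncate w _) (by simpa using hlen)
  exact ⟨_, hprefix hzw (le_max_left _ _), y, hyY, hprefix hyw (le_max_right _ _)⟩

end

/-- For finite subsets `X, Y ⊆ A*`: the two right ideals `X·A*` and `Y·A*` are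
mutually essential in each other (every principal right ideal inside one meets
the other) if and only if `X·A^ω = Y·A^ω`. -/
theorem stmt_18 (n : ℕ) (hn : 2 ≤ n) (X Y : Set (List (Fin n)))
    (hX : X.Finite) (hY : Y.Finite) :
    ((∀ z ∈ {z : List (Fin n) | ∃ x ∈ X, x <+: z},
        ∃ w : List (Fin n), z <+: w ∧ ∃ y ∈ Y, y <+: w) ∧
     (∀ z ∈ {z : List (Fin n) | ∃ y ∈ Y, y <+: z},
        ∃ w : List (Fin n), z <+: w ∧ ∃ x ∈ X, x <+: w)) ↔
    {w : ℕ → Fin n | ∃ x ∈ X, InfPrefix x w} =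
      {w : ℕ → Fin n | ∃ y ∈ Y, InfPrefix y w} := by
  change IsEssentialIn X Y ∧ IsEssentialIn Y X ↔ infCylinder X = infCylinder Y
  have hn0 : 0 < n := by omega
  constructor
  · rintro ⟨hXY, hYX⟩
    exact (infCylinder_subset_of_isEssentialIn hY hXY).antisymm
      (infCylinder_subset_of_isEssentialIn hX hYX)
  · intro hXY
    exact ⟨isEssentialIn_of_infCylinder_subset hn0 hXY.le,
      isEssentialIn_of_infCylinder_subset hn0 hXY.ge⟩
end
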